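/- Let G = (V,E) be a finite simple graph with a vertex s of degree exactly 4 whose four incident edges are {s,i}, {s,j}, {s,k}, {s,l}, and suppose {i,j} ∉ E. Define G' = (V,E') with E' = (E ∪ {{i,j}}) \ {{s,i},{s,j},{s,k},{s,l}}. Then the generic stress numbers satisfy s(G) ≤ s(G') + 1. -/

import Mathlib

noncomputable section

open Classical in
/-- The edge vector of the pair `(i, j)` under the realization `p`: the function `V → ℝ × ℝ`
whose value is `p i - p j` at `i`, `p j - p i` at `j`, and `0` elsewhere. -/
def edgeVec {V : Type*} (p : V → ℝ × ℝ) (i j : V) : V → ℝ × ℝ :=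
  fun v => if v = i then p i - p j else if v = j then p j - p i else 0

/-- The set of edge vectors of a set `F` of (potential) edges under the realization `p`. -/
def edgeVecs {V : Type*} (p : V → ℝ × ℝ) (F : Set (Sym2 V)) : Set (V → ℝ × ℝ) :=
  {x | ∃ i j, s(i, j) ∈ F ∧ x = edgeVec p i j}

/-- The rank of the edge vectors of `F` under the realization `p`. -/
def rankOf {V : Type*} (p : V → ℝ × ℝ) (F : Set (Sym2 V)) : ℕ :=
  Module.finrank ℝ (Submodule.span ℝ (edgeVecs p F))

/-- The generic rank of a set of edges: the maximum over all realizations `p` of the rank. -/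
def genRankSet {V : Type*} (F : Set (Sym2 V)) : ℕ :=
  ⨆ p : V → ℝ × ℝ, rankOf p F

/-- The generic rank `r(G)` of a graph. -/
def genRank {V : Type*} (G : SimpleGraph V) : ℕ := genRankSet G.edgeSet

/-- The stress number `s_p(F)` of a set of edges under the realization `p`
(the dimension of the space of resolvable stresses). -/
def stressNum {V : Type*} (p : V → ℝ × ℝ) (F : Set (Sym2 V)) : ℕ :=
  F.ncard - rankOf p F

/-- The generic stress number `s(F)` of a set of edges. -/
def genStressSet {V : Type*} (F : Set (Sym2 V)) : ℕ := F.ncard - genRankSet F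

/-- The generic stress number `s(G)` of a graph. -/
def genStress {V : Type*} (G : SimpleGraph V) : ℕ := G.edgeSet.ncard - genRank G

/-- A planar configuration is in general position if it is injective and no three distinct
vertices have collinear images. -/
def GeneralPosition {V : Type*} (p : V → ℝ × ℝ) : Prop :=
  Function.Injective p ∧
    ∀ i j k : V, i ≠ j → j ≠ k → i ≠ k →
      ¬ Collinear ℝ ({p i, p j, p k} : Set (ℝ × ℝ))

/-- `W_U`: the subspace of functions `V → ℝ × ℝ` vanishing at every vertex outside `U`. -/
def vanishOn {V : Type*} (U : Set V) : Submodule ℝ (V → ℝ × ℝ) where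
  carrier := {f | ∀ v ∉ U, f v = 0}
  zero_mem' := fun v _ => rfl
  add_mem' := by
    intro a b ha hb v hv
    simp [Pi.add_apply, ha v hv, hb v hv]
  smul_mem' := by
    intro c f hf v hv
    simp [Pi.smul_apply, hf v hv]

end


/-!
Take a realization `p` of `G'` of maximal rank in which `p i`, `p j`, `p k` are not collinear:
the rank is lower semicontinuous in `p`, and moving `p j`, `p k` slightly achieves
non-collinearity. Put `w` at `2 p j - p i`, so that `p j` is the midpoint of `p i` and `p w`;
then the edge vector of `ij` is a combination of those of `wi` and `wj`, and the edge vectors of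
`G'` lie in the span of those of `G`. They all vanish at `w`, whereas the edge vectors of `wi` and
`wk` evaluate at `w` to two independent vectors. Hence `r(G) ≥ r(G') + 2`, and since
`|E'| = |E| - 3` the stress number drops by at most one.
-/

open Module Submodule Filter Topology

section EdgeVectors

variable {V : Type*}

lemma edgeVec_comm (p : V → ℝ × ℝ) (a b : V) : edgeVec p b a = edgeVec p a b := by
  funext v
  simp only [edgeVec]
  split_ifs <;> simp_all

lemma edgeVec_apply_left (p : V → ℝ × ℝ) (a b : V) : edgeVec p a b a = p a - p b :=
  if_pos rfl

lemma edgeVec_apply_of_ne (p : V → ℝ × ℝ) {a b v : V} (ha : v ≠ a) (hb : v ≠ b) :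
    edgeVec p a b v = 0 := by
  simp [edgeVec, ha, hb]

lemma edgeVec_congr {p q : V → ℝ × ℝ} {a b : V} (ha : p a = q a) (hb : p b = q b) :
    edgeVec p a b = edgeVec q a b := by
  unfold edgeVec
  rw [ha, hb]

lemma continuous_edgeVec (a b : V) : Continuous fun p : V → ℝ × ℝ => edgeVec p a b := by
  refine continuous_pi fun v => ?_
  unfold edgeVec
  split_ifs <;> fun_prop

lemma edgeVec_eq_of_midpoint (p : V → ℝ × ℝ) {w i j : V} (hwi : w ≠ i) (hwj : w ≠ j)
    (hij : i ≠ j) (hw : p w = (2 : ℝ) • p j - p i) :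
    edgeVec p i j = (2⁻¹ : ℝ) • edgeVec p w i - edgeVec p w j := by
  funext v
  simp only [edgeVec, Pi.sub_apply, Pi.smul_apply, hw]
  split_ifs <;> subst_vars <;> first | contradiction | module

lemma edgeVecs_congr {p q : V → ℝ × ℝ} {F : Set (Sym2 V)} (h : ∀ e ∈ F, ∀ v ∈ e, p v = q v) :
    edgeVecs p F = edgeVecs q F := by
  have hpq {a b : V} (hab : s(a, b) ∈ F) : edgeVec p a b = edgeVec q a b :=
    edgeVec_congr (h _ hab a (Sym2.mem_mk_left a b)) (h _ hab b (Sym2.mem_mk_right a b))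
  ext x
  exact ⟨fun ⟨a, b, hab, hx⟩ => ⟨a, b, hab, hx.trans (hpq hab)⟩,
    fun ⟨a, b, hab, hx⟩ => ⟨a, b, hab, hx.trans (hpq hab).symm⟩⟩

lemma span_edgeVecs_le_ker_proj (p : V → ℝ × ℝ) {F : Set (Sym2 V)} {w : V}
    (h : ∀ e ∈ F, w ∉ e) : span ℝ (edgeVecs p F) ≤ LinearMap.ker (LinearMap.proj w) := by
  rw [span_le]
  rintro _ ⟨a, b, hab, rfl⟩
  have hw := h _ hab
  rw [Sym2.mem_iff, not_or] at hw
  exact edgeVec_apply_of_ne p hw.1 hw.2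

end EdgeVectors

section GenericRank

variable {V : Type*} [Finite V]

lemma bddAbove_range_rankOf (F : Set (Sym2 V)) :
    BddAbove (Set.range fun p : V → ℝ × ℝ => rankOf p F) :=
  ⟨finrank ℝ (V → ℝ × ℝ), by rintro _ ⟨p, rfl⟩; exact Submodule.finrank_le _⟩

lemma rankOf_le_genRankSet (p : V → ℝ × ℝ) (F : Set (Sym2 V)) : rankOf p F ≤ genRankSet F :=
  le_ciSup (bddAbove_range_rankOf F) p

lemma exists_rankOf_eq_genRankSet (F : Set (Sym2 V)) :
    ∃ p : V → ℝ × ℝ, rankOf p F = genRankSet F :=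
  Nat.sSup_mem (Set.range_nonempty _) (bddAbove_range_rankOf F)

/-- A basis of edge vectors at `p` stays linearly independent nearby. -/
lemma eventually_rankOf_le (p : V → ℝ × ℝ) (F : Set (Sym2 V)) :
    ∀ᶠ q in 𝓝 p, rankOf p F ≤ rankOf q F := by
  -- the normed structure on `V → ℝ × ℝ` behind `LinearIndependent.eventually` needs `Fintype V`
  have := Fintype.ofFinite V
  obtain ⟨b, hbF, hspan, hb⟩ := exists_linearIndependent ℝ (edgeVecs p F)
  have : Fintype b := hb.setFinite.fintype
  choose a c hac hval using fun x : b => hbF x.2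
  have hcont : Continuous fun q : V → ℝ × ℝ => fun x : b => edgeVec q (a x) (c x) :=
    continuous_pi fun x => continuous_edgeVec (a x) (c x)
  have hb' : LinearIndependent ℝ fun x : b => edgeVec p (a x) (c x) := by
    rwa [show (fun x : b => edgeVec p (a x) (c x)) = Subtype.val from funext (hval · |>.symm)]
  filter_upwards [hcont.continuousAt.eventually hb'.eventually] with q hq
  calc rankOf p F = Fintype.card b := by
        rw [rankOf, ← hspan, finrank_span_set_eq_card hb, Set.toFinset_card]
    _ ≤ rankOf q F := by
        have hmem (x : b) : edgeVec q (a x) (c x) ∈ span ℝ (edgeVecs q F) :=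
          subset_span ⟨a x, c x, hac x, rfl⟩
        have hq' : LinearIndependent ℝ ((span ℝ (edgeVecs q F)).subtype ∘
            fun x : b => (⟨_, hmem x⟩ : span ℝ (edgeVecs q F))) := hq
        exact (LinearIndependent.of_comp _ hq').fintype_card_le_finrank

end GenericRank

def cross (a b : ℝ × ℝ) : ℝ := a.1 * b.2 - a.2 * b.1

lemma linearIndependent_pair_of_cross_ne_zero {a b : ℝ × ℝ} (h : cross a b ≠ 0) :
    LinearIndependent ℝ ![a, b] := by
  rw [LinearIndependent.pair_iff]
  intro s t hst
  have h1 : s * a.1 + t * b.1 = 0 := by simpa using congrArg Prod.fst hst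
  have h2 : s * a.2 + t * b.2 = 0 := by simpa using congrArg Prod.snd hst
  have hs : s * cross a b = 0 := by unfold cross; linear_combination b.2 * h1 - b.1 * h2
  have ht : t * cross a b = 0 := by unfold cross; linear_combination a.1 * h2 - a.2 * h1
  exact ⟨(mul_eq_zero.mp hs).resolve_right h, (mul_eq_zero.mp ht).resolve_right h⟩

/-- A monic quadratic has at most two roots, so it cannot vanish at `δ/4`, `δ/2` and `3δ/4`. -/
lemma frequently_quadratic_ne_zero (b c : ℝ) : ∃ᶠ ε in 𝓝 (0 : ℝ), ε ^ 2 + b * ε + c ≠ 0 := by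
  intro h
  obtain ⟨δ, hδ, hball⟩ := Metric.eventually_nhds_iff.mp h
  have hroot (t : ℝ) (ht₀ : 0 < t) (ht₁ : t < 1) : (t * δ) ^ 2 + b * (t * δ) + c = 0 :=
    not_not.mp (hball (by rw [Real.dist_0_eq_abs, abs_of_pos (by positivity)]; nlinarith))
  have h₁ := hroot (1 / 4) (by norm_num) (by norm_num)
  have h₂ := hroot (1 / 2) (by norm_num) (by norm_num)
  have h₃ := hroot (3 / 4) (by norm_num) (by norm_num)
  nlinarith

/-- Moving `p j` along the first axis and `p k` along the second one by `ε` turns the cross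
product into a monic quadratic in `ε`. -/
lemma frequently_cross_ne_zero {V : Type*} (p : V → ℝ × ℝ) {i j k : V}
    (hij : i ≠ j) (hik : i ≠ k) (hjk : j ≠ k) :
    ∃ᶠ q in 𝓝 p, cross (q j - q i) (q k - q i) ≠ 0 := by
  classical
  set c : V → ℝ × ℝ := Pi.single j (1, 0) + Pi.single k (0, 1)
  have hline : Tendsto (fun ε : ℝ => p + ε • c) (𝓝 0) (𝓝 p) := by
    have hcont : Continuous fun ε : ℝ => p + ε • c := by fun_prop
    simpa using hcont.tendsto 0
  refine hline.frequently ((frequently_quadratic_ne_zero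
    ((p j - p i).1 + (p k - p i).2) (cross (p j - p i) (p k - p i))).mono fun ε hε => ?_)
  have hci : c i = 0 := by simp [c, hij, hik]
  have hcj : c j = (1, 0) := by simp [c, hjk]
  have hck : c k = (0, 1) := by simp [c, hjk.symm]
  convert hε using 1
  simp only [cross, Pi.add_apply, Pi.smul_apply, hci, hcj, hck, Prod.fst_sub, Prod.snd_sub,
    Prod.fst_add, Prod.snd_add, Prod.smul_fst, Prod.smul_snd, smul_eq_mul, smul_zero, add_zero]
  ring

lemma Submodule.finrank_add_finrank_map_le {K M N : Type*} [DivisionRing K] [AddCommGroup M]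
    [Module K M] [AddCommGroup N] [Module K N] [FiniteDimensional K M]
    {W' W : Submodule K M} (f : M →ₗ[K] N) (hle : W' ≤ W) (hker : W' ≤ LinearMap.ker f) :
    finrank K W' + finrank K (W.map f) ≤ finrank K W := by
  have hnullity := LinearMap.finrank_range_add_finrank_ker (f.domRestrict W)
  rw [LinearMap.range_domRestrict, LinearMap.ker_domRestrict] at hnullity
  have hW' : finrank K W' ≤ finrank K ((LinearMap.ker f).comap W.subtype) :=
    (Submodule.comapSubtypeEquivOfLe hle).finrank_eq.symm.le.trans
      (Submodule.finrank_mono (Submodule.comap_mono hker))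
  omega

section OneExtension

variable {V : Type*} [Finite V]

lemma exists_rankOf_eq_genRankSet_and_cross_ne_zero (F : Set (Sym2 V)) {i j k : V}
    (hij : i ≠ j) (hik : i ≠ k) (hjk : j ≠ k) :
    ∃ p : V → ℝ × ℝ, rankOf p F = genRankSet F ∧ cross (p j - p i) (p k - p i) ≠ 0 := by
  obtain ⟨p, hp⟩ := exists_rankOf_eq_genRankSet F
  obtain ⟨q, hrank, hcross⟩ := ((eventually_rankOf_le p F).and_frequently
    (frequently_cross_ne_zero p hij hik hjk)).exists
  exact ⟨q, le_antisymm (rankOf_le_genRankSet q F) (hp ▸ hrank), hcross⟩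

lemma rankOf_add_two_le_rankOf_update [DecidableEq V] (p : V → ℝ × ℝ) {F F' : Set (Sym2 V)}
    {w i j k : V} (hwi : w ≠ i) (hwj : w ≠ j) (hwk : w ≠ k) (hij : i ≠ j)
    (hF' : F' ⊆ insert s(i, j) F) (hw : ∀ e ∈ F', w ∉ e)
    (hwiF : s(w, i) ∈ F) (hwjF : s(w, j) ∈ F) (hwkF : s(w, k) ∈ F)
    (hcross : cross (p j - p i) (p k - p i) ≠ 0) :
    rankOf p F' + 2 ≤ rankOf (Function.update p w ((2 : ℝ) • p j - p i)) F := by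
  set q := Function.update p w ((2 : ℝ) • p j - p i)
  have hq {v : V} (hv : v ≠ w) : q v = p v := Function.update_of_ne hv _ _
  have hqw : q w = (2 : ℝ) • p j - p i := Function.update_self _ _ _
  have hrank' : rankOf p F' = rankOf q F' := by
    rw [rankOf, rankOf,
      edgeVecs_congr fun e he v hv => (hq (ne_of_mem_of_not_mem hv (hw e he))).symm]
  have hij_mem : edgeVec q i j ∈ span ℝ (edgeVecs q F) := by
    rw [edgeVec_eq_of_midpoint q hwi hwj hij (by rw [hqw, hq hwi.symm, hq hwj.symm])]
    exact sub_mem (smul_mem _ _ (subset_span ⟨w, i, hwiF, rfl⟩))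
      (subset_span ⟨w, j, hwjF, rfl⟩)
  have hmono : span ℝ (edgeVecs q F') ≤ span ℝ (edgeVecs q F) := by
    rw [span_le]
    rintro _ ⟨a, b, hab, rfl⟩
    rcases hF' hab with hab' | hab'
    · rcases Sym2.eq_iff.mp hab' with ⟨rfl, rfl⟩ | ⟨rfl, rfl⟩
      · exact hij_mem
      · rw [edgeVec_comm]
        exact hij_mem
    · exact subset_span ⟨a, b, hab', rfl⟩
  have hind : LinearIndependent ℝ ![q w - q i, q w - q k] := by
    apply linearIndependent_pair_of_cross_ne_zero
    rw [hqw, hq hwi.symm, hq hwk.symm]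
    convert mul_ne_zero (neg_ne_zero.mpr two_ne_zero) hcross using 1
    simp only [cross, Prod.fst_sub, Prod.snd_sub, Prod.smul_fst, Prod.smul_snd, smul_eq_mul]
    ring
  have hmap : 2 ≤ finrank ℝ ((span ℝ (edgeVecs q F)).map (LinearMap.proj w)) := by
    have hspan : finrank ℝ (span ℝ (Set.range ![q w - q i, q w - q k])) = 2 := by
      simpa using finrank_span_eq_card hind
    rw [← hspan]
    refine Submodule.finrank_mono (span_le.mpr ?_)
    rintro _ ⟨m, rfl⟩
    fin_cases m
    · exact ⟨_, subset_span ⟨w, i, hwiF, rfl⟩, edgeVec_apply_left q w i⟩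
    · exact ⟨_, subset_span ⟨w, k, hwkF, rfl⟩, edgeVec_apply_left q w k⟩
  have hgain := Submodule.finrank_add_finrank_map_le (LinearMap.proj w) hmono
    (span_edgeVecs_le_ker_proj q hw)
  rw [hrank']
  unfold rankOf
  omega

lemma genRankSet_add_two_le {F F' : Set (Sym2 V)} {w i j k : V} (hwi : w ≠ i) (hwj : w ≠ j)
    (hwk : w ≠ k) (hij : i ≠ j) (hik : i ≠ k) (hjk : j ≠ k)
    (hF' : F' ⊆ insert s(i, j) F) (hw : ∀ e ∈ F', w ∉ e)
    (hwiF : s(w, i) ∈ F) (hwjF : s(w, j) ∈ F) (hwkF : s(w, k) ∈ F) :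
    genRankSet F' + 2 ≤ genRankSet F := by
  classical
  obtain ⟨p, hp, hcross⟩ := exists_rankOf_eq_genRankSet_and_cross_ne_zero F' hij hik hjk
  calc genRankSet F' + 2 = rankOf p F' + 2 := by rw [hp]
    _ ≤ rankOf (Function.update p w ((2 : ℝ) • p j - p i)) F :=
      rankOf_add_two_le_rankOf_update p hwi hwj hwk hij hF' hw hwiF hwjF hwkF hcross
    _ ≤ genRankSet F := rankOf_le_genRankSet _ F

end OneExtension

namespace SimpleGraph

variable {V : Type*} {G : SimpleGraph V}

lemma incidenceSet_eq_of_subset_of_card_le [Finite V] {w : V} {T : Set (Sym2 V)}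
    (hT : T ⊆ G.incidenceSet w) (hcard : Nat.card (G.neighborSet w) ≤ T.ncard) :
    G.incidenceSet w = T := by
  classical
  refine (Set.eq_of_subset_of_ncard_le hT ?_ (Set.toFinite _)).symm
  rwa [← Nat.card_coe_set_eq, Nat.card_congr (G.incidenceSetEquivNeighborSet w)]

lemma notMem_of_mem_insert_diff_incidenceSet {w i j : V} {e : Sym2 V} (hwi : w ≠ i)
    (hwj : w ≠ j) (he : e ∈ insert s(i, j) G.edgeSet \ G.incidenceSet w) : w ∉ e := by
  obtain ⟨rfl | he, hew⟩ := he
  · simp [hwi, hwj]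
  · exact fun hw => hew ⟨he, hw⟩

lemma edgeSet_fromEdgeSet_insert_diff {i j : V} (hij : i ≠ j) (T : Set (Sym2 V)) :
    (fromEdgeSet (insert s(i, j) G.edgeSet \ T)).edgeSet = insert s(i, j) G.edgeSet \ T := by
  rw [edgeSet_fromEdgeSet, sdiff_eq_left, Set.disjoint_left]
  rintro e ⟨rfl | he, -⟩
  · simpa using hij
  · exact G.not_isDiag_of_mem_edgeSet he

end SimpleGraph

lemma Set.ncard_insert_diff_add_ncard {α : Type*} {E T : Set α} {a : α} (hE : E.Finite)
    (ha : a ∉ E) (hT : T ⊆ E) : (insert a E \ T).ncard + T.ncard = E.ncard + 1 := by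
  rw [Set.ncard_sdiff_add_ncard_of_subset (hT.trans (Set.subset_insert a E)) (hE.insert a),
    Set.ncard_insert_of_notMem ha hE]

/-- If `w` is a vertex of degree exactly 4 with incident edges `{w,i}, {w,j}, {w,k}, {w,l}` and
`{i,j} ∉ E`, then for `G' = (V, (E ∪ {{i,j}}) \ {{w,i},{w,j},{w,k},{w,l}})` we have
`s(G) ≤ s(G') + 1`. -/
theorem genStress_le_one_extension_four {V : Type*} [Fintype V] (G : SimpleGraph V)
    (w i j k l : V) (hi : G.Adj w i) (hj : G.Adj w j) (hk : G.Adj w k) (hl : G.Adj w l)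
    (hij : i ≠ j) (hjk : j ≠ k) (hik : i ≠ k)
    (hil : i ≠ l) (hjl : j ≠ l) (hkl : k ≠ l)
    (hdeg : Nat.card (G.neighborSet w) = 4)
    (hnadj : ¬ G.Adj i j) :
    genStress G ≤ genStress (SimpleGraph.fromEdgeSet
      ((G.edgeSet ∪ {s(i, j)}) \ {s(w, i), s(w, j), s(w, k), s(w, l)})) + 1 := by
  set T : Set (Sym2 V) := {s(w, i), s(w, j), s(w, k), s(w, l)}
  have hTinc : T ⊆ G.incidenceSet w := by
    simp [T, Set.insert_subset_iff, SimpleGraph.mem_incidenceSet, hi, hj, hk, hl]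
  have hTcard : T.ncard = 4 := by
    rw [Set.ncard_insert_of_notMem, Set.ncard_insert_of_notMem, Set.ncard_pair] <;> grind
  have hinc := SimpleGraph.incidenceSet_eq_of_subset_of_card_le hTinc (hdeg.trans hTcard.symm).le
  rw [Set.union_singleton]
  have hrank : genRankSet (insert s(i, j) G.edgeSet \ T) + 2 ≤ genRankSet G.edgeSet :=
    genRankSet_add_two_le hi.ne hj.ne hk.ne hij hik hjk Set.sdiff_subset
      (fun e he => SimpleGraph.notMem_of_mem_insert_diff_incidenceSet hi.ne hj.ne (hinc ▸ he))
      hi hj hk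
  have hcard := Set.ncard_insert_diff_add_ncard (Set.toFinite G.edgeSet)
    (G.mem_edgeSet.not.mpr hnadj) (hTinc.trans (G.incidenceSet_subset w))
  unfold genStress genRank
  rw [SimpleGraph.edgeSet_fromEdgeSet_insert_diff hij]
  omega
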